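/- arXiv:2004.07150 — 4 statements merged into one kernel-verified Lean document; each statement's English description precedes it below -/
import Mathlib

section
/- Let M be a k×k matrix (k ≥ 1) whose rows belong to the unit simplex (entries nonnegative, each row sums to 1). If ‖m^i − e_i‖_∞ ≤ δ for each i ∈ [k] and some δ ∈ [0, 1/(2√(2k))], then M is invertible and ‖M^{-T} − I‖_∞ ≤ 2√2·δ·k, where ‖·‖_∞ denotes the matrix operator norm induced by the vector ℓ∞-norm. -/
/-- The operator norm of a square real matrix induced by the vector ℓ∞-norm,
i.e. the maximum absolute row sum. -/
noncomputable def linftyOpNorm {k : ℕ} (A : Matrix (Fin k) (Fin k) ℝ) : ℝ :=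
  ⨆ i : Fin k, ∑ j : Fin k, |A i j|

section aux

attribute [local instance] Matrix.frobeniusSeminormedAddCommGroup

theorem stmt0 {k : ℕ} (hk : 1 ≤ k) (M : Matrix (Fin k) (Fin k) ℝ) (δ : ℝ)
    (hM0 : ∀ i j, 0 ≤ M i j) (hM1 : ∀ i, ∑ j, M i j = 1)
    (hδ0 : 0 ≤ δ) (hδ1 : δ ≤ 1 / (2 * Real.sqrt (2 * k)))
    (hrows : ∀ i : Fin k, ‖M i - Pi.single i 1‖ ≤ δ) :
    IsUnit M ∧ linftyOpNorm (Matrix.transpose M⁻¹ - 1) ≤ 2 * Real.sqrt 2 * δ * k := by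
  have hk0 : (0:ℝ) < k := by exact_mod_cast hk
  have hs2k : (0:ℝ) < Real.sqrt (2*k) := Real.sqrt_pos.mpr (by positivity)
  have hs2k1 : (1:ℝ) < Real.sqrt (2*k) := by
    rw [show (1:ℝ) = Real.sqrt 1 from Real.sqrt_one.symm]
    have hk1 : (1:ℝ) ≤ k := by exact_mod_cast hk
    exact Real.sqrt_lt_sqrt (by norm_num) (by nlinarith)
  have hδhalf : δ < 1/2 := by
    refine lt_of_le_of_lt hδ1 ?_
    rw [div_lt_iff₀ (by positivity)]
    nlinarith
  -- entrywise bounds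
  have hent : ∀ i j : Fin k, |M i j - (Pi.single i 1 : Fin k → ℝ) j| ≤ δ := by
    intro i j
    have h := (norm_le_pi_norm (M i - Pi.single i 1) j).trans (hrows i)
    simpa [Real.norm_eq_abs] using h
  have hdiag : ∀ i, 1 - M i i ≤ δ := by
    intro i
    have h := hent i i
    rw [Pi.single_eq_same] at h
    have := neg_le_of_abs_le h
    linarith
  set E : Matrix (Fin k) (Fin k) ℝ := 1 - M with hE
  have hErow : ∀ i, ∑ j, |E i j| ≤ 2*δ := by
    intro i
    have hsum : ∑ j ∈ Finset.univ.erase i, M i j = 1 - M i i := by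
      rw [Finset.sum_erase_eq_sub (Finset.mem_univ i), hM1 i]
    have h1 : ∑ j, |E i j| = |E i i| + ∑ j ∈ Finset.univ.erase i, |E i j| :=
      (Finset.add_sum_erase _ _ (Finset.mem_univ i)).symm
    have h2 : ∀ j ∈ Finset.univ.erase i, |E i j| = M i j := by
      intro j hj
      have hji : j ≠ i := Finset.ne_of_mem_erase hj
      have : E i j = -(M i j) := by
        simp [hE, Matrix.sub_apply, Matrix.one_apply_ne hji.symm]
      rw [this, abs_neg, abs_of_nonneg (hM0 i j)]
    have h3 : |E i i| = 1 - M i i := by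
      have : E i i = 1 - M i i := by simp [hE, Matrix.sub_apply, Matrix.one_apply]
      rw [this, abs_of_nonneg]
      have := hM1 i
      have : M i i ≤ 1 := by
        rw [← hM1 i]
        exact Finset.single_le_sum (fun j _ => hM0 i j) (Finset.mem_univ i)
      linarith
    rw [h1, h3, Finset.sum_congr rfl h2, hsum]
    have := hdiag i
    linarith
  have hEabs : ∀ i j, |E i j| ≤ δ := by
    intro i j
    have h := hent i j
    have : E i j = -(M i j - (Pi.single i 1 : Fin k → ℝ) j) := by
      rcases eq_or_ne i j with rfl | hij
      · simp [hE, Matrix.sub_apply, Matrix.one_apply]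
      · simp [hE, Matrix.sub_apply, Matrix.one_apply, hij,
          Pi.single_eq_of_ne (fun h => hij h.symm)]
    rw [this, abs_neg]
    exact h
  have hErow2 : ∀ i, ∑ j, (E i j)^2 ≤ 2*δ^2 := by
    intro i
    calc ∑ j, (E i j)^2 ≤ ∑ j, δ * |E i j| := by
          refine Finset.sum_le_sum fun j _ => ?_
          rw [← sq_abs]
          have h0 : (0:ℝ) ≤ |E i j| := abs_nonneg _
          nlinarith [hEabs i j]
      _ = δ * ∑ j, |E i j| := by rw [Finset.mul_sum]
      _ ≤ δ * (2*δ) := mul_le_mul_of_nonneg_left (hErow i) hδ0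
      _ = 2*δ^2 := by ring
  -- Frobenius norm bound on E
  have hsq : ∀ (A : Matrix (Fin k) (Fin k) ℝ),
      ‖A‖ = Real.sqrt (∑ i, ∑ j, (A i j)^2) := by
    intro A
    rw [Matrix.frobenius_norm_def, Real.sqrt_eq_rpow]
    congr 1
    refine Finset.sum_congr rfl fun i _ => Finset.sum_congr rfl fun j _ => ?_
    rw [Real.norm_eq_abs, show ((2:ℝ) = ((2:ℕ):ℝ)) by norm_num, Real.rpow_natCast, sq_abs]
  have hEF : ‖E‖ ≤ Real.sqrt (2*k) * δ := by
    rw [hsq E]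
    have h1 : ∑ i, ∑ j, (E i j)^2 ≤ (2*k)*δ^2 := by
      calc ∑ i : Fin k, ∑ j, (E i j)^2 ≤ ∑ _i : Fin k, 2*δ^2 :=
            Finset.sum_le_sum fun i _ => hErow2 i
        _ = k * (2*δ^2) := by simp [mul_comm]
        _ = (2*k)*δ^2 := by ring
    calc Real.sqrt (∑ i, ∑ j, (E i j)^2) ≤ Real.sqrt ((2*k)*δ^2) := Real.sqrt_le_sqrt h1
      _ = Real.sqrt (2*k) * δ := by
          rw [Real.sqrt_mul (by positivity), Real.sqrt_sq hδ0]
  have hEhalf : ‖E‖ ≤ 1/2 := by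
    refine hEF.trans ?_
    have := mul_le_mul_of_nonneg_left hδ1 (le_of_lt hs2k)
    rw [mul_one_div] at this
    calc Real.sqrt (2*k) * δ ≤ Real.sqrt (2*k) / (2 * Real.sqrt (2*k)) := this
      _ = 1/2 := by
          field_simp
  -- invertibility
  have hdet : M.det ≠ 0 := by
    refine det_ne_zero_of_sum_row_lt_diag fun i => ?_
    have hnorm : ∀ a b : Fin k, ‖M a b‖ = M a b := fun a b => Real.norm_of_nonneg (hM0 a b)
    have hsum : ∑ j ∈ Finset.univ.erase i, ‖M i j‖ = 1 - M i i := by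
      rw [Finset.sum_congr rfl fun j _ => hnorm i j,
        Finset.sum_erase_eq_sub (Finset.mem_univ i), hM1 i]
    rw [hsum, hnorm i i]
    have h1 := hdiag i
    linarith
  have hdetU : IsUnit M.det := isUnit_iff_ne_zero.mpr hdet
  have hMunit : IsUnit M := (Matrix.isUnit_iff_isUnit_det M).mpr hdetU
  have hinv : M⁻¹ * M = 1 := Matrix.nonsing_inv_mul M hdetU
  refine ⟨hMunit, ?_⟩
  set A : Matrix (Fin k) (Fin k) ℝ := M⁻¹ - 1 with hA
  have hAid : A = A * E + E := by
    rw [hA, hE, sub_mul, mul_sub, mul_one, one_mul, hinv]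
    abel
  have hAle : ‖A‖ ≤ 2 * (Real.sqrt (2*k) * δ) := by
    have h1 : ‖A‖ ≤ ‖A * E‖ + ‖E‖ := by
      conv_lhs => rw [hAid]
      exact norm_add_le _ _
    have h2 : ‖A * E‖ ≤ ‖A‖ * ‖E‖ := Matrix.frobenius_norm_mul A E
    nlinarith [norm_nonneg A, norm_nonneg E]
  -- final bound
  haveI : Nonempty (Fin k) := ⟨⟨0, hk⟩⟩
  have hB0 : (0:ℝ) ≤ 2 * Real.sqrt 2 * δ * k := by positivity
  refine ciSup_le fun i => ?_
  have hAe : ∀ j, |(Matrix.transpose M⁻¹ - 1) i j| = |A j i| := by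
    intro j
    have : (Matrix.transpose M⁻¹ - 1) i j = A j i := by
      rcases eq_or_ne i j with rfl | hij
      · simp [hA, Matrix.sub_apply, Matrix.transpose_apply, Matrix.one_apply]
      · simp [hA, Matrix.sub_apply, Matrix.transpose_apply, Matrix.one_apply_ne hij,
          Matrix.one_apply_ne hij.symm]
    rw [this]
  rw [Finset.sum_congr rfl fun j _ => hAe j]
  -- Cauchy-Schwarz
  have hcs : (∑ j, |A j i|)^2 ≤ (k : ℝ) * ∑ j, (A j i)^2 := by
    have := sq_sum_le_card_mul_sum_sq (s := (Finset.univ : Finset (Fin k)))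
      (f := fun j => |A j i|)
    simpa [sq_abs] using this
  have hcol : ∑ j, (A j i)^2 ≤ ‖A‖^2 := by
    rw [hsq A, Real.sq_sqrt (by positivity)]
    calc ∑ j, (A j i)^2 = ∑ j, (fun l => (A j l)^2) i := by simp
      _ ≤ ∑ j, ∑ l, (A j l)^2 := Finset.sum_le_sum fun j _ =>
          Finset.single_le_sum (fun l _ => sq_nonneg (A j l)) (Finset.mem_univ i)
  have hA2 : ‖A‖^2 ≤ (2 * (Real.sqrt (2*k) * δ))^2 := by
    have := norm_nonneg A
    nlinarith
  have hsq2k : Real.sqrt (2*k) ^ 2 = 2*k := Real.sq_sqrt (by positivity)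
  have hsqrt2 : Real.sqrt 2 ^ 2 = 2 := Real.sq_sqrt (by norm_num)
  have hs2 : (0:ℝ) ≤ Real.sqrt 2 := Real.sqrt_nonneg 2
  have hfin : (∑ j, |A j i|)^2 ≤ (2 * Real.sqrt 2 * δ * k)^2 := by
    calc (∑ j, |A j i|)^2 ≤ (k : ℝ) * ∑ j, (A j i)^2 := hcs
      _ ≤ (k : ℝ) * ‖A‖^2 := mul_le_mul_of_nonneg_left hcol (le_of_lt hk0)
      _ ≤ (k : ℝ) * (2 * (Real.sqrt (2*k) * δ))^2 :=
          mul_le_mul_of_nonneg_left hA2 (le_of_lt hk0)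
      _ = (2 * Real.sqrt 2 * δ * k)^2 := by
          have e1 : (2 * (Real.sqrt (2*(k:ℝ)) * δ))^2 = 2^2 * (Real.sqrt (2*(k:ℝ))^2 * δ^2) := by
            ring
          have e2 : (2 * Real.sqrt 2 * δ * (k:ℝ))^2 = Real.sqrt 2^2 * (2*δ*(k:ℝ))^2 := by
            ring
          rw [e1, e2, hsq2k, hsqrt2]
          ring
  have hsum0 : (0:ℝ) ≤ ∑ j, |A j i| := Finset.sum_nonneg fun j _ => abs_nonneg _
  nlinarith [hfin, hsum0, hB0, sq_nonneg (∑ j, |A j i| - 2 * Real.sqrt 2 * δ * k)]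

end aux
end

section
/- Let Θ be an n×k random matrix whose rows are i.i.d. random probability vectors with second moments E[θ_s θ_t] = α/(k(αk+1)) for s ≠ t and E[θ_s²] = (α+1)/(k(αk+1)) (e.g., Dirichlet(α,…,α) rows). Then the spectral norm of Θ satisfies ‖Θ‖ ≤ 2√(2n/k) with probability at least 1 − 5^k·exp(−2n/k²). -/
open MeasureTheory

/-- Euclidean norm of a vector in ℝ^k. -/
noncomputable def vecNorm2 {k : ℕ} (v : Fin k → ℝ) : ℝ :=
  Real.sqrt (∑ i, (v i) ^ 2)

/-- The spectral norm (largest singular value) of a real matrix: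
the operator norm induced by the Euclidean norms. -/
noncomputable def specNorm {n k : ℕ} (A : Matrix (Fin n) (Fin k) ℝ) : ℝ :=
  ⨆ x : {x : Fin k → ℝ // vecNorm2 x = 1}, vecNorm2 (A.mulVec x.1)

open scoped ENNReal

lemma bdd01 {k : ℕ} (μ : Measure (Fin k → ℝ))
    (hsimplex : ∀ᵐ v ∂μ, (∀ s, 0 ≤ v s) ∧ ∑ s, v s = 1) :
    ∀ᵐ v ∂μ, ∀ s, 0 ≤ v s ∧ v s ≤ 1 := by
  filter_upwards [hsimplex] with v hv s
  refine ⟨hv.1 s, ?_⟩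
  calc v s ≤ ∑ t, v t := Finset.single_le_sum (fun t _ => hv.1 t) (Finset.mem_univ s)
    _ = 1 := hv.2

lemma int_mul {k : ℕ} (μ : Measure (Fin k → ℝ)) [IsProbabilityMeasure μ]
    (hsimplex : ∀ᵐ v ∂μ, (∀ s, 0 ≤ v s) ∧ ∑ s, v s = 1) (s t : Fin k) :
    Integrable (fun v => v s * v t) μ := by
  refine Integrable.mono' (integrable_const 1)
    (((measurable_pi_apply s).mul (measurable_pi_apply t)).aestronglyMeasurable) ?_
  filter_upwards [bdd01 μ hsimplex] with v hv
  have hs := hv s; have ht := hv t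
  rw [Real.norm_eq_abs, abs_mul, abs_of_nonneg hs.1, abs_of_nonneg ht.1]
  nlinarith [hs.1, hs.2, ht.1, ht.2]

lemma int_coord {k : ℕ} (μ : Measure (Fin k → ℝ)) [IsProbabilityMeasure μ]
    (hsimplex : ∀ᵐ v ∂μ, (∀ s, 0 ≤ v s) ∧ ∑ s, v s = 1) (s : Fin k) :
    Integrable (fun v => v s) μ := by
  refine Integrable.mono' (integrable_const 1)
    ((measurable_pi_apply s).aestronglyMeasurable) ?_
  filter_upwards [bdd01 μ hsimplex] with v hv
  rw [Real.norm_eq_abs, abs_of_nonneg (hv s).1]; exact (hv s).2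

lemma mean_eq {k : ℕ} (hk : 1 ≤ k) (α : ℝ) (hα : 0 < α)
    (μ : Measure (Fin k → ℝ)) [IsProbabilityMeasure μ]
    (hsimplex : ∀ᵐ v ∂μ, (∀ s, 0 ≤ v s) ∧ ∑ s, v s = 1)
    (hsq : ∀ s, ∫ v, (v s) ^ 2 ∂μ = (α + 1) / (k * (α * k + 1)))
    (hcross : ∀ s t, s ≠ t → ∫ v, v s * v t ∂μ = α / (k * (α * k + 1)))
    (s : Fin k) : ∫ v, v s ∂μ = 1 / k := by
  have hkpos : (0:ℝ) < k := by exact_mod_cast hk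
  have hk0 : (k : ℝ) ≠ 0 := ne_of_gt hkpos
  have hD : (k : ℝ) * (α * k + 1) ≠ 0 := by positivity
  have h1 : ∫ v, v s ∂μ = ∫ v, ∑ t, v s * v t ∂μ := by
    apply integral_congr_ae
    filter_upwards [hsimplex] with v hv
    rw [← Finset.mul_sum, hv.2, mul_one]
  rw [h1, integral_finset_sum _ (fun t _ => int_mul μ hsimplex s t)]
  rw [← Finset.add_sum_erase _ _ (Finset.mem_univ s)]
  have hself : ∫ v, v s * v s ∂μ = (α + 1) / (k * (α * k + 1)) := by
    rw [← hsq s]; congr 1; ext v; ring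
  rw [hself]
  have hrest : ∀ t ∈ Finset.univ.erase s, ∫ v, v s * v t ∂μ = α / (k * (α * k + 1)) := by
    intro t ht
    rw [show ∫ v, v s * v t ∂μ = ∫ v, v t * v s ∂μ by congr 1; ext v; ring]
    exact hcross t s (Finset.ne_of_mem_erase ht)
  rw [Finset.sum_congr rfl hrest, Finset.sum_const, Finset.card_erase_of_mem (Finset.mem_univ s),
    Finset.card_univ, Fintype.card_fin, nsmul_eq_mul]
  have hcast : ((k - 1 : ℕ) : ℝ) = (k : ℝ) - 1 := by
    rw [Nat.cast_sub hk]; norm_num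
  rw [hcast]
  field_simp
  ring

lemma mgf_le {k : ℕ} (hk : 1 ≤ k) (α : ℝ) (hα : 0 < α)
    (μ : Measure (Fin k → ℝ)) [IsProbabilityMeasure μ]
    (hsimplex : ∀ᵐ v ∂μ, (∀ s, 0 ≤ v s) ∧ ∑ s, v s = 1)
    (hsq : ∀ s, ∫ v, (v s) ^ 2 ∂μ = (α + 1) / (k * (α * k + 1)))
    (hcross : ∀ s t, s ≠ t → ∫ v, v s * v t ∂μ = α / (k * (α * k + 1)))
    (s : Fin k) : ∫ v, Real.exp (v s) ∂μ ≤ 1 + (Real.exp 1 - 1) / k := by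
  have hexp_aff : ∀ x : ℝ, 0 ≤ x → x ≤ 1 → Real.exp x ≤ 1 + (Real.exp 1 - 1) * x := by
    intro x h0 h1
    have h := convexOn_exp.2 (Set.mem_univ (0:ℝ)) (Set.mem_univ (1:ℝ))
      (by linarith : (0:ℝ) ≤ 1 - x) h0 (by ring)
    simp only [smul_eq_mul, mul_zero, mul_one, zero_add, Real.exp_zero] at h
    linarith
  have hint1 : Integrable (fun v => Real.exp (v s)) μ := by
    refine Integrable.mono' (integrable_const (Real.exp 1))
      ((measurable_pi_apply s).exp.aestronglyMeasurable) ?_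
    filter_upwards [bdd01 μ hsimplex] with v hv
    rw [Real.norm_eq_abs, abs_of_nonneg (Real.exp_pos _).le]
    exact Real.exp_le_exp.2 (hv s).2
  have hint2 : Integrable (fun v => 1 + (Real.exp 1 - 1) * v s) μ :=
    (integrable_const 1).add ((int_coord μ hsimplex s).const_mul _)
  have hle : ∫ v, Real.exp (v s) ∂μ ≤ ∫ v, 1 + (Real.exp 1 - 1) * v s ∂μ := by
    apply integral_mono_ae hint1 hint2
    filter_upwards [bdd01 μ hsimplex] with v hv
    exact hexp_aff _ (hv s).1 (hv s).2
  rw [integral_add (integrable_const 1) ((int_coord μ hsimplex s).const_mul _),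
    integral_const, integral_const_mul, mean_eq hk α hα μ hsimplex hsq hcross s] at hle
  simp only [measureReal_def, measure_univ, ENNReal.toReal_one, smul_eq_mul, one_mul, mul_one] at hle
  calc ∫ v, Real.exp (v s) ∂μ ≤ 1 + (Real.exp 1 - 1) * (1 / (k:ℝ)) := hle
    _ = 1 + (Real.exp 1 - 1) / k := by ring

lemma aux_pow {E : Type*} [MeasurableSpace E] (μ : Measure E) [IsProbabilityMeasure μ]
    (n : ℕ) (f : E → ℝ) :
    ∫ x : Fin n → E, ∏ i, f (x i) ∂(Measure.pi fun _ => μ) = (∫ x, f x ∂μ) ^ n := by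
  letI : MeasureSpace E := ⟨μ⟩
  haveI : SigmaFinite (volume : Measure E) := inferInstanceAs (SigmaFinite μ)
  have h : (Measure.pi fun _ : Fin n => μ) = (volume : Measure (Fin n → E)) := rfl
  rw [integral_fintype_prod_eq_pow (ι := Fin n) f]
  rw [Fintype.card_fin]

lemma specNorm_le_of_colsum {n k : ℕ} (M : Fin n → Fin k → ℝ) (c : ℝ) (hc : 0 ≤ c)
    (hrow : ∀ i, (∀ s, 0 ≤ M i s) ∧ ∑ s, M i s = 1)
    (hcol : ∀ s, ∑ i, M i s ≤ c) :
    specNorm (Matrix.of M) ≤ Real.sqrt c := by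
  apply Real.iSup_le _ (Real.sqrt_nonneg c)
  rintro ⟨x, hx⟩
  have hx2 : ∑ s, x s ^ 2 = 1 := by
    rw [vecNorm2, Real.sqrt_eq_one] at hx
    exact hx
  show vecNorm2 ((Matrix.of M).mulVec x) ≤ Real.sqrt c
  rw [vecNorm2]
  apply Real.sqrt_le_sqrt
  have key : ∀ i, ((Matrix.of M).mulVec x i) ^ 2 ≤ ∑ s, M i s * x s ^ 2 := by
    intro i
    have hcs := Finset.sum_mul_sq_le_sq_mul_sq Finset.univ
      (fun s => Real.sqrt (M i s)) (fun s => Real.sqrt (M i s) * x s)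
    have e1 : ∀ s : Fin k, Real.sqrt (M i s) * (Real.sqrt (M i s) * x s) = M i s * x s :=
      fun s => by rw [← mul_assoc, Real.mul_self_sqrt ((hrow i).1 s)]
    have e2 : ∀ s : Fin k, Real.sqrt (M i s) ^ 2 = M i s := fun s => Real.sq_sqrt ((hrow i).1 s)
    have e3 : ∀ s : Fin k, (Real.sqrt (M i s) * x s) ^ 2 = M i s * x s ^ 2 :=
      fun s => by rw [mul_pow, e2 s]
    simp only [e1, e2, e3] at hcs
    have hmv : (Matrix.of M).mulVec x i = ∑ s, M i s * x s := by
      simp [Matrix.mulVec, dotProduct]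
    rw [hmv]
    calc (∑ s, M i s * x s) ^ 2 ≤ (∑ s, M i s) * ∑ s, M i s * x s ^ 2 := hcs
      _ = ∑ s, M i s * x s ^ 2 := by rw [(hrow i).2, one_mul]
  calc ∑ i, ((Matrix.of M).mulVec x i) ^ 2 ≤ ∑ i, ∑ s, M i s * x s ^ 2 :=
        Finset.sum_le_sum fun i _ => key i
    _ = ∑ s, (∑ i, M i s) * x s ^ 2 := by rw [Finset.sum_comm]; simp [Finset.sum_mul]
    _ ≤ ∑ s, c * x s ^ 2 :=
        Finset.sum_le_sum fun s _ => mul_le_mul_of_nonneg_right (hcol s) (sq_nonneg _)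
    _ = c := by rw [← Finset.mul_sum, hx2, mul_one]

theorem stmt11 {Ω : Type*} [MeasurableSpace Ω] (P : Measure Ω) [IsProbabilityMeasure P]
    {n k : ℕ} (hn : 1 ≤ n) (hk : 1 ≤ k) (α : ℝ) (hα : 0 < α)
    (μ : Measure (Fin k → ℝ)) [IsProbabilityMeasure μ]
    (hsimplex : ∀ᵐ v ∂μ, (∀ s, 0 ≤ v s) ∧ ∑ s, v s = 1)
    (hsq : ∀ s, ∫ v, (v s) ^ 2 ∂μ = (α + 1) / (k * (α * k + 1)))
    (hcross : ∀ s t, s ≠ t → ∫ v, v s * v t ∂μ = α / (k * (α * k + 1)))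
    (Θ : Ω → Fin n → Fin k → ℝ) (hmeas : Measurable Θ)
    (hdist : Measure.map Θ P = Measure.pi fun _ : Fin n => μ) :
    ENNReal.ofReal (1 - 5 ^ k * Real.exp (-2 * (n : ℝ) / k ^ 2)) ≤
      P {ω | specNorm (Matrix.of (Θ ω)) ≤ 2 * Real.sqrt (2 * n / k)} := by
  classical
  have hkpos : (0:ℝ) < k := by exact_mod_cast hk
  have hnpos : (0:ℝ) < n := by exact_mod_cast hn
  set a : ℝ := 8 * n / k with ha
  have ha0 : 0 ≤ a := by positivity
  set B : ℝ := 5 ^ k * Real.exp (-2 * (n : ℝ) / k ^ 2) with hB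
  have hB0 : 0 ≤ B := by positivity
  -- a.e. rows in simplex
  have hae_pi : ∀ᵐ M ∂(Measure.pi fun _ : Fin n => μ),
      ∀ i, (∀ s, 0 ≤ M i s) ∧ ∑ s, M i s = 1 := by
    refine ae_all_iff.2 fun i => ?_
    exact Measure.tendsto_eval_ae_ae (μ := fun _ : Fin n => μ) hsimplex
  have hae_P : ∀ᵐ ω ∂P, ∀ i, (∀ s, 0 ≤ Θ ω i s) ∧ ∑ s, Θ ω i s = 1 := by
    have hmap : ∀ᵐ M ∂(Measure.map Θ P), ∀ i, (∀ s, 0 ≤ M i s) ∧ ∑ s, M i s = 1 := by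
      rw [hdist]; exact hae_pi
    exact ae_of_ae_map hmeas.aemeasurable hmap
  -- tail bound for each column
  have htail : ∀ s : Fin k, P {ω | a ≤ ∑ i, Θ ω i s} ≤
      ENNReal.ofReal (Real.exp ((Real.exp 1 - 9) * n / k)) := by
    intro s
    set g : (Fin n → Fin k → ℝ) → ℝ := fun M => Real.exp (∑ i, M i s) with hgdef
    have hgmeas : Measurable g := by
      apply Measurable.exp
      exact Finset.measurable_sum _ fun i _ => (measurable_pi_apply s).comp (measurable_pi_apply i)
    have hgbd : ∀ᵐ M ∂(Measure.pi fun _ : Fin n => μ), ‖g M‖ ≤ Real.exp n := by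
      filter_upwards [hae_pi] with M hM
      rw [Real.norm_eq_abs, abs_of_nonneg (Real.exp_pos _).le]
      apply Real.exp_le_exp.2
      calc ∑ i, M i s ≤ ∑ _i : Fin n, (1:ℝ) := Finset.sum_le_sum fun i _ => by
            calc M i s ≤ ∑ t, M i t :=
                  Finset.single_le_sum (fun t _ => (hM i).1 t) (Finset.mem_univ s)
              _ = 1 := (hM i).2
        _ = n := by simp
    have hgint : Integrable g (Measure.pi fun _ : Fin n => μ) :=
      Integrable.mono' (integrable_const _) hgmeas.aestronglyMeasurable hgbd
    have hfint : Integrable (fun ω => g (Θ ω)) P := by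
      have h : Integrable g (Measure.map Θ P) := by rw [hdist]; exact hgint
      exact (integrable_map_measure hgmeas.aestronglyMeasurable hmeas.aemeasurable).1 h
    have hIeq : ∫ ω, g (Θ ω) ∂P = (∫ v, Real.exp (v s) ∂μ) ^ n := by
      have h1 : ∫ M, g M ∂(Measure.map Θ P) = ∫ ω, g (Θ ω) ∂P := by
        apply integral_map hmeas.aemeasurable
        rw [hdist]
        exact hgmeas.aestronglyMeasurable
      rw [← h1, hdist]
      calc ∫ M, g M ∂(Measure.pi fun _ : Fin n => μ)
          = ∫ M, ∏ i, Real.exp (M i s) ∂(Measure.pi fun _ : Fin n => μ) := by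
            congr 1; ext M; exact Real.exp_sum _ _
        _ = (∫ v, Real.exp (v s) ∂μ) ^ n := aux_pow μ n (fun v => Real.exp (v s))
    have he1 : (1:ℝ) ≤ Real.exp 1 := by nlinarith [Real.add_one_le_exp (1:ℝ)]
    have hInt_le : ∫ ω, g (Θ ω) ∂P ≤ Real.exp ((Real.exp 1 - 1) * n / k) := by
      rw [hIeq]
      have hnn : 0 ≤ ∫ v, Real.exp (v s) ∂μ := integral_nonneg fun v => (Real.exp_pos _).le
      have hbase : (0:ℝ) ≤ 1 + (Real.exp 1 - 1) / k := by
        have := div_nonneg (by linarith : (0:ℝ) ≤ Real.exp 1 - 1) hkpos.le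
        linarith
      calc (∫ v, Real.exp (v s) ∂μ) ^ n ≤ (1 + (Real.exp 1 - 1) / k) ^ n :=
            pow_le_pow_left₀ hnn (mgf_le hk α hα μ hsimplex hsq hcross s) n
        _ ≤ (Real.exp ((Real.exp 1 - 1) / k)) ^ n := by
            apply pow_le_pow_left₀ hbase
            have := Real.add_one_le_exp ((Real.exp 1 - 1) / k)
            linarith
        _ = Real.exp ((Real.exp 1 - 1) * n / k) := by
            rw [← Real.exp_nat_mul]; congr 1; ring
    have hmar := mul_meas_ge_le_integral_of_nonneg (μ := P) (f := fun ω => g (Θ ω))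
      (Filter.Eventually.of_forall fun ω => (Real.exp_pos _).le) hfint (Real.exp a)
    have hmono : P {ω | a ≤ ∑ i, Θ ω i s} ≤ P {ω | Real.exp a ≤ g (Θ ω)} := by
      apply measure_mono
      intro ω hω
      exact Real.exp_le_exp.2 hω
    have hfinR : (P {ω | Real.exp a ≤ g (Θ ω)}).toReal ≤
        Real.exp ((Real.exp 1 - 9) * n / k) := by
      have hpa : 0 < Real.exp a := Real.exp_pos a
      have h2 : (P {ω | Real.exp a ≤ g (Θ ω)}).toReal ≤
          Real.exp ((Real.exp 1 - 1) * n / k) / Real.exp a := by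
        rw [le_div_iff₀ hpa, mul_comm]
        exact hmar.trans hInt_le
      refine h2.trans (le_of_eq ?_)
      rw [← Real.exp_sub]
      congr 1
      rw [ha]; ring
    calc P {ω | a ≤ ∑ i, Θ ω i s} ≤ P {ω | Real.exp a ≤ g (Θ ω)} := hmono
      _ ≤ ENNReal.ofReal (Real.exp ((Real.exp 1 - 9) * n / k)) := by
          rw [← ENNReal.ofReal_toReal (measure_ne_top P _)]
          exact ENNReal.ofReal_le_ofReal hfinR
  -- deterministic part
  have hdet : ∀ ω, (∀ i, (∀ s, 0 ≤ Θ ω i s) ∧ ∑ s, Θ ω i s = 1) →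
      (∀ s, ∑ i, Θ ω i s ≤ a) →
      specNorm (Matrix.of (Θ ω)) ≤ 2 * Real.sqrt (2 * n / k) := by
    intro ω hrows hcols
    have h1 := specNorm_le_of_colsum (Θ ω) a ha0 hrows hcols
    have h2 : Real.sqrt a = 2 * Real.sqrt (2 * n / k) := by
      rw [show a = 2 ^ 2 * (2 * n / k) by rw [ha]; ring,
        Real.sqrt_mul (by positivity), Real.sqrt_sq (by norm_num : (0:ℝ) ≤ 2)]
    rwa [h2] at h1
  -- complement bound
  set good := {ω | specNorm (Matrix.of (Θ ω)) ≤ 2 * Real.sqrt (2 * n / k)} with hgood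
  have hcompl : goodᶜ ⊆ {ω | ¬ ∀ i, (∀ s, 0 ≤ Θ ω i s) ∧ ∑ s, Θ ω i s = 1} ∪
      ⋃ s : Fin k, {ω | a ≤ ∑ i, Θ ω i s} := by
    intro ω hω
    simp only [Set.mem_union, Set.mem_iUnion, Set.mem_setOf_eq]
    by_contra hcon
    push_neg at hcon
    exact hω (hdet ω hcon.1 fun s => (hcon.2 s).le)
  have hPbad : P goodᶜ ≤ ENNReal.ofReal B := by
    calc P goodᶜ ≤ P ({ω | ¬ ∀ i, (∀ s, 0 ≤ Θ ω i s) ∧ ∑ s, Θ ω i s = 1} ∪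
          ⋃ s : Fin k, {ω | a ≤ ∑ i, Θ ω i s}) := measure_mono hcompl
      _ ≤ P {ω | ¬ ∀ i, (∀ s, 0 ≤ Θ ω i s) ∧ ∑ s, Θ ω i s = 1} +
          P (⋃ s : Fin k, {ω | a ≤ ∑ i, Θ ω i s}) := measure_union_le _ _
      _ = P (⋃ s : Fin k, {ω | a ≤ ∑ i, Θ ω i s}) := by
          rw [ae_iff.1 hae_P, zero_add]
      _ ≤ ∑ s : Fin k, P {ω | a ≤ ∑ i, Θ ω i s} := by
          exact measure_iUnion_fintype_le P _
      _ ≤ ∑ _s : Fin k, ENNReal.ofReal (Real.exp ((Real.exp 1 - 9) * n / k)) :=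
          Finset.sum_le_sum fun s _ => htail s
      _ = (k : ℝ≥0∞) * ENNReal.ofReal (Real.exp ((Real.exp 1 - 9) * n / k)) := by
          rw [Finset.sum_const, Finset.card_univ, Fintype.card_fin, nsmul_eq_mul]
      _ = ENNReal.ofReal ((k : ℝ) * Real.exp ((Real.exp 1 - 9) * n / k)) := by
          rw [ENNReal.ofReal_mul (by positivity), ENNReal.ofReal_natCast]
      _ ≤ ENNReal.ofReal B := by
          apply ENNReal.ofReal_le_ofReal
          have he : Real.exp 1 ≤ 2.7182818286 := (Real.exp_one_lt_d9).le
          have hexp : Real.exp ((Real.exp 1 - 9) * n / k) ≤ Real.exp (-2 * n / k ^ 2) := by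
            apply Real.exp_le_exp.2
            rw [div_le_div_iff₀ hkpos (by positivity)]
            have hk1 : (1:ℝ) ≤ k := by exact_mod_cast hk
            have h1 : (2:ℝ) ≤ (9 - Real.exp 1) * k := by nlinarith
            nlinarith [mul_le_mul_of_nonneg_left h1 (mul_nonneg hnpos.le hkpos.le)]
          have hk5 : (k : ℝ) ≤ 5 ^ k := by
            have := Nat.lt_pow_self (n := k) (by norm_num : 1 < 5)
            exact_mod_cast this.le
          calc (k : ℝ) * Real.exp ((Real.exp 1 - 9) * n / k)
              ≤ 5 ^ k * Real.exp (-2 * n / k ^ 2) :=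
                mul_le_mul hk5 hexp (Real.exp_pos _).le (by positivity)
            _ = B := rfl
  -- final assembly
  by_cases hB1 : 1 - B ≤ 0
  · rw [ENNReal.ofReal_eq_zero.2 hB1]; exact zero_le'
  push_neg at hB1
  have hPg : 1 ≤ P good + P goodᶜ := by
    have h := measure_union_le (μ := P) good goodᶜ
    rwa [Set.union_compl_self, measure_univ] at h
  have key : ENNReal.ofReal (1 - B) + P goodᶜ ≤ P good + P goodᶜ := by
    refine le_trans ?_ hPg
    calc ENNReal.ofReal (1 - B) + P goodᶜ ≤ ENNReal.ofReal (1 - B) + ENNReal.ofReal B :=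
          add_le_add le_rfl hPbad
      _ = ENNReal.ofReal (1 - B + B) := (ENNReal.ofReal_add hB1.le hB0).symm
      _ = 1 := by norm_num
  exact (ENNReal.add_le_add_iff_right (measure_ne_top P _)).1 key
end

section
/- (LP dual value bounds) Let Θ ∈ [0,1]^{n×k} (k ≥ 2) have rows in the unit simplex, let c := Θᵀe with smallest and largest entries c_min, c_max, and suppose for each s ∈ [k] row s of Θ satisfies ‖θ^s − e_s‖_∞ ≤ η with η ≤ (1/(2√2·k))·(c_min/c_max). Fix i ∈ [k] and let β* be the optimal value of the linear program: maximize β subject to β·θ^i + Θᵀu = c, β ≥ 0, u ≥ 0 (equivalently, the dual of minimizing cᵀy subject to Θy ≥ 0 and yᵀθ^i ≥ 1). Then c_i − 2√2·η·k·c_max ≤ β* ≤ c_i/(1 − η). -/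
set_option maxHeartbeats 1000000



theorem stmt13 {n k : ℕ} (hk : 2 ≤ k) (hkn : k ≤ n)
    (Θ : Matrix (Fin n) (Fin k) ℝ)
    (hΘ0 : ∀ p s, 0 ≤ Θ p s) (hΘ1 : ∀ p, ∑ s, Θ p s = 1)
    (c : Fin k → ℝ) (hc : ∀ s, c s = ∑ p, Θ p s)
    (cmin cmax : ℝ) (hcmin : cmin = ⨅ s, c s) (hcmax : cmax = ⨆ s, c s)
    (η : ℝ) (hη0 : 0 < η) (hη1 : η < 1)
    (hη : η ≤ 1 / (2 * Real.sqrt 2 * k) * (cmin / cmax))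
    (hrows : ∀ s : Fin k, ‖Θ (Fin.castLE hkn s) - Pi.single s 1‖ ≤ η)
    (i : Fin k) (βstar : ℝ)
    (hβ : βstar = sSup {β : ℝ | 0 ≤ β ∧ ∃ u : Fin n → ℝ, (∀ p, 0 ≤ u p) ∧
      ∀ s, β * Θ (Fin.castLE hkn i) s + ∑ p, u p * Θ p s = c s}) :
    c i - 2 * Real.sqrt 2 * η * k * cmax ≤ βstar ∧ βstar ≤ c i / (1 - η) := by
  have hk0 : 0 < k := by omega
  have hK1 : (1:ℝ) ≤ (k:ℝ) := by exact_mod_cast hk0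
  have hK0 : (0:ℝ) < (k:ℝ) := by positivity
  set s2 := Real.sqrt 2 with hs2
  have hs2_1 : (1:ℝ) ≤ s2 := by
    rw [hs2, show (1:ℝ) = Real.sqrt 1 by rw [Real.sqrt_one]]
    exact Real.sqrt_le_sqrt (by norm_num)
  have hs2_0 : (0:ℝ) < s2 := lt_of_lt_of_le one_pos hs2_1
  -- entrywise bounds from the row condition
  have hq : ∀ s t : Fin k, |Θ (Fin.castLE hkn s) t - (if t = s then (1:ℝ) else 0)| ≤ η := by
    intro s t
    have h2 := norm_le_pi_norm (Θ (Fin.castLE hkn s) - Pi.single s 1) t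
    have h3 := h2.trans (hrows s)
    simpa [Pi.single_apply, Real.norm_eq_abs] using h3
  have hdiag : ∀ s : Fin k, 1 - η ≤ Θ (Fin.castLE hkn s) s := by
    intro s
    have h := hq s s
    rw [if_pos rfl] at h
    have h2 := (abs_le.mp h).1
    linarith
  -- positivity of c entries
  have hcge : ∀ s, 1 - η ≤ c s := by
    intro s
    rw [hc]
    calc 1 - η ≤ Θ (Fin.castLE hkn s) s := hdiag s
    _ ≤ ∑ p, Θ p s := Finset.single_le_sum (fun p _ => hΘ0 p s) (Finset.mem_univ _)
  have hbddA : BddAbove (Set.range c) := Set.Finite.bddAbove (Set.finite_range c)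
  have hbddB : BddBelow (Set.range c) := Set.Finite.bddBelow (Set.finite_range c)
  have hminle : ∀ s, cmin ≤ c s := fun s => by rw [hcmin]; exact ciInf_le hbddB s
  have hlemax : ∀ s, c s ≤ cmax := fun s => by rw [hcmax]; exact le_ciSup hbddA s
  have hcmin_pos : 0 < cmin := by
    rw [hcmin]
    have : Nonempty (Fin k) := ⟨⟨0, hk0⟩⟩
    have h := le_ciInf hcge
    linarith
  have hcmax_pos : 0 < cmax := lt_of_lt_of_le hcmin_pos ((hminle i).trans (hlemax i))
  have hmm : cmin ≤ cmax := (hminle i).trans (hlemax i)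
  -- bounds on k*η
  have hkη : (k:ℝ) * η ≤ 1 / (2 * s2) := by
    have h1 : cmin / cmax ≤ 1 := div_le_one_of_le₀ hmm hcmax_pos.le
    have h2 : η ≤ 1 / (2 * s2 * k) := by
      calc η ≤ 1 / (2 * s2 * k) * (cmin / cmax) := hη
      _ ≤ 1 / (2 * s2 * k) * 1 := by
          apply mul_le_mul_of_nonneg_left h1
          positivity
      _ = 1 / (2 * s2 * k) := by ring
    have h3 : (k:ℝ) * (1 / (2 * s2 * k)) = 1 / (2 * s2) := by
      field_simp
    have h4 := mul_le_mul_of_nonneg_left h2 hK0.le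
    rw [h3] at h4
    exact h4
  have hkη2 : (k:ℝ) * η ≤ 1/2 := by
    have : 1 / (2 * s2) ≤ 1/2 := by
      rw [div_le_div_iff₀ (by positivity) (by norm_num)]
      nlinarith
    linarith
  have hkηc : (k:ℝ) * η * cmax ≤ cmin / (2 * s2) := by
    have h2 : η * ((k:ℝ) * cmax) ≤ 1 / (2 * s2 * k) * (cmin / cmax) * ((k:ℝ) * cmax) := by
      apply mul_le_mul_of_nonneg_right hη (by positivity)
    have h3 : 1 / (2 * s2 * k) * (cmin / cmax) * ((k:ℝ) * cmax) = cmin / (2 * s2) := by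
      field_simp
    calc (k:ℝ) * η * cmax = η * ((k:ℝ) * cmax) := by ring
    _ ≤ cmin / (2 * s2) := by rw [← h3]; exact h2
  -- the k×k matrix with columns the first k rows of Θ
  set A : Matrix (Fin k) (Fin k) ℝ := Matrix.of (fun s j => Θ (Fin.castLE hkn j) s) with hA
  have hAapp : ∀ s j, A s j = Θ (Fin.castLE hkn j) s := fun s j => rfl
  have hE : ∀ s j : Fin k, |A s j - (if j = s then (1:ℝ) else 0)| ≤ η := by
    intro s j
    have := hq j s
    rw [hAapp]
    rcases eq_or_ne s j with h | h
    · subst h; simpa using this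
    · rw [if_neg (Ne.symm h)]
      rw [if_neg h] at this
      exact this
  have hEoff : ∀ s j : Fin k, j ≠ s → |A s j| ≤ η := by
    intro s j hj
    have := hE s j
    rwa [if_neg hj, sub_zero] at this
  have hEdiag : ∀ s : Fin k, 1 - η ≤ A s s := by
    intro s; rw [hAapp]; exact hdiag s
  -- determinant nonzero via diagonal dominance
  have hdet : A.det ≠ 0 := by
    apply det_ne_zero_of_sum_row_lt_diag
    intro t
    have h1 : ∑ j ∈ Finset.univ.erase t, ‖A t j‖ ≤ ((k:ℝ) - 1) * η := by
      have h2 : ∑ j ∈ Finset.univ.erase t, ‖A t j‖ ≤ ∑ _j ∈ Finset.univ.erase t, η := by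
        apply Finset.sum_le_sum
        intro j hj
        exact hEoff t j (Finset.ne_of_mem_erase hj)
      have h3 : ∑ _j ∈ Finset.univ.erase t, η = ((k:ℝ) - 1) * η := by
        rw [Finset.sum_const, Finset.card_erase_of_mem (Finset.mem_univ t)]
        simp only [Finset.card_univ, Fintype.card_fin, nsmul_eq_mul]
        have : ((k - 1 : ℕ) : ℝ) = (k:ℝ) - 1 := by
          push_cast [Nat.cast_sub hk0]
          ring
        rw [this]
      linarith
    have h4 : 1 - η ≤ ‖A t t‖ := by
      rw [Real.norm_eq_abs]
      exact le_trans (hEdiag t) (le_abs_self _)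
    have h5 : ((k:ℝ) - 1) * η < 1 - η := by nlinarith
    linarith
  have hUnit : IsUnit A.det := isUnit_iff_ne_zero.mpr hdet
  set z := A⁻¹.mulVec c with hzdef
  have hAz : A.mulVec z = c := by
    rw [hzdef, Matrix.mulVec_mulVec, Matrix.mul_nonsing_inv A hUnit, Matrix.one_mulVec]
  have hAzs : ∀ s, ∑ j, A s j * z j = c s := by
    intro s
    have := congrFun hAz s
    simpa [Matrix.mulVec, dotProduct] using this
  -- rewrite: z t = c t - perturbation
  have hrec : ∀ t, z t = c t - ∑ j, (A t j - (if j = t then (1:ℝ) else 0)) * z j := by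
    intro t
    have h := hAzs t
    have h2 : ∑ j, (A t j - (if j = t then (1:ℝ) else 0)) * z j
        = (∑ j, A t j * z j) - z t := by
      simp only [sub_mul]
      rw [Finset.sum_sub_distrib]
      congr 1
      simp [ite_mul]
    rw [h2, h]
    ring
  -- sup-norm bound on z
  obtain ⟨t0, -, ht0⟩ := Finset.exists_max_image Finset.univ (fun j => |z j|)
    ⟨⟨0, hk0⟩, Finset.mem_univ _⟩
  have hpert : ∀ t, |∑ j, (A t j - (if j = t then (1:ℝ) else 0)) * z j| ≤ (k:ℝ) * η * |z t0| := by
    intro t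
    calc |∑ j, (A t j - (if j = t then (1:ℝ) else 0)) * z j|
        ≤ ∑ j, |(A t j - (if j = t then (1:ℝ) else 0)) * z j| := Finset.abs_sum_le_sum_abs _ _
    _ ≤ ∑ _j : Fin k, η * |z t0| := by
        apply Finset.sum_le_sum
        intro j _
        rw [abs_mul]
        exact mul_le_mul (hE t j) (ht0 j (Finset.mem_univ j)) (abs_nonneg _)
          (le_of_lt hη0)
    _ = (k:ℝ) * η * |z t0| := by
        rw [Finset.sum_const, Finset.card_univ, Fintype.card_fin, nsmul_eq_mul]
        ring
  have hM : (1 - (k:ℝ) * η) * |z t0| ≤ cmax := by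
    have h1 := hrec t0
    have h2 := hpert t0
    set P := ∑ j, (A t0 j - (if j = t0 then (1:ℝ) else 0)) * z j with hP
    have h3 : |z t0| ≤ |c t0| + |P| := by
      rw [h1]
      simpa using norm_sub_le (c t0) P
    have h4 : |c t0| = c t0 := abs_of_pos (lt_of_lt_of_le hcmin_pos (hminle t0))
    have h5 := hlemax t0
    rw [h4] at h3
    nlinarith
  have hzabs : |z t0| ≤ 2 * s2 * cmax := by
    have h1 : 2 * s2 * ((k:ℝ) * η) ≤ 1 := by
      have h0 := (le_div_iff₀ (by positivity : (0:ℝ) < 2 * s2)).mp hkη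
      linarith
    nlinarith [abs_nonneg (z t0)]
  have hlow : ∀ t, c t - (k:ℝ) * η * |z t0| ≤ z t := by
    intro t
    have h1 := hrec t
    have h2 := (abs_le.mp (hpert t)).2
    linarith [h1, h2]
  have hKz : (k:ℝ) * η * |z t0| ≤ cmin := by
    have h1 : (k:ℝ) * η * |z t0| ≤ (k:ℝ) * η * (2 * s2 * cmax) :=
      mul_le_mul_of_nonneg_left hzabs (by positivity)
    have h2 : (k:ℝ) * η * (2 * s2 * cmax) = 2 * s2 * ((k:ℝ) * η * cmax) := by ring
    have h3 : 2 * s2 * ((k:ℝ) * η * cmax) ≤ 2 * s2 * (cmin / (2 * s2)) :=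
      mul_le_mul_of_nonneg_left hkηc (by positivity)
    have h4 : 2 * s2 * (cmin / (2 * s2)) = cmin := by field_simp
    linarith
  have hznn : ∀ t, 0 ≤ z t := by
    intro t
    have := hlow t
    have := hminle t
    linarith
  have hzi : c i - 2 * s2 * η * (k:ℝ) * cmax ≤ z i := by
    have h1 := hlow i
    have h2 : (k:ℝ) * η * |z t0| ≤ (k:ℝ) * η * (2 * s2 * cmax) :=
      mul_le_mul_of_nonneg_left hzabs (by positivity)
    nlinarith
  -- the feasible point
  set S : Set ℝ := {β : ℝ | 0 ≤ β ∧ ∃ u : Fin n → ℝ, (∀ p, 0 ≤ u p) ∧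
      ∀ s, β * Θ (Fin.castLE hkn i) s + ∑ p, u p * Θ p s = c s} with hS
  have hmem : z i ∈ S := by
    refine ⟨hznn i, fun p => if h : (p : ℕ) < k then
      (if (⟨(p : ℕ), h⟩ : Fin k) = i then 0 else z ⟨(p : ℕ), h⟩) else 0, ?_, ?_⟩
    · intro p
      dsimp only
      by_cases h : (p : ℕ) < k
      · rw [dif_pos h]
        by_cases h2 : (⟨(p : ℕ), h⟩ : Fin k) = i
        · rw [if_pos h2]
        · rw [if_neg h2]; exact hznn _
      · rw [dif_neg h]
    · intro s
      set u : Fin n → ℝ := fun p => if h : (p : ℕ) < k then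
        (if (⟨(p : ℕ), h⟩ : Fin k) = i then 0 else z ⟨(p : ℕ), h⟩) else 0 with hu
      have hsum1 : ∑ p, u p * Θ p s
          = ∑ p ∈ Finset.univ.map (Fin.castLEEmb hkn), u p * Θ p s := by
        symm
        apply Finset.sum_subset (Finset.subset_univ _)
        intro p _ hp
        have hpk : ¬ ((p : ℕ) < k) := by
          intro hlt
          apply hp
          rw [Finset.mem_map]
          exact ⟨⟨(p : ℕ), hlt⟩, Finset.mem_univ _, by simp [Fin.castLEEmb, Fin.castLE]⟩
        rw [hu]
        simp only [dif_neg hpk, zero_mul]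
      have hsum2 : ∑ p ∈ Finset.univ.map (Fin.castLEEmb hkn), u p * Θ p s
          = ∑ j : Fin k, (if j = i then 0 else z j) * Θ (Fin.castLE hkn j) s := by
        rw [Finset.sum_map]
        apply Finset.sum_congr rfl
        intro j _
        have hjj : ((Fin.castLEEmb hkn j : Fin n) : ℕ) < k := j.isLt
        have hmk : (⟨((Fin.castLEEmb hkn j : Fin n) : ℕ), hjj⟩ : Fin k) = j := rfl
        have hju : u (Fin.castLEEmb hkn j) = if j = i then 0 else z j := by
          rw [hu]
          dsimp only
          rw [dif_pos hjj, hmk]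
        rw [hju]
        rfl
      have hsum3 : ∑ j : Fin k, (if j = i then 0 else z j) * Θ (Fin.castLE hkn j) s
          = (∑ j : Fin k, z j * Θ (Fin.castLE hkn j) s) - z i * Θ (Fin.castLE hkn i) s := by
        have h1 : ∀ j : Fin k, (if j = i then 0 else z j) * Θ (Fin.castLE hkn j) s
            = z j * Θ (Fin.castLE hkn j) s
              - (if j = i then z j * Θ (Fin.castLE hkn j) s else 0) := by
          intro j; by_cases h : j = i <;> simp [h]
        rw [Finset.sum_congr rfl (fun j _ => h1 j), Finset.sum_sub_distrib,
          Finset.sum_ite_eq' Finset.univ i (fun j => z j * Θ (Fin.castLE hkn j) s)]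
        simp
      have hA2 : ∑ j : Fin k, z j * Θ (Fin.castLE hkn j) s = c s := by
        rw [← hAzs s]
        apply Finset.sum_congr rfl
        intro j _
        rw [hAapp]
        ring
      rw [hsum1, hsum2, hsum3, hA2]
      ring
  -- upper bound on any feasible β
  have hub : ∀ β ∈ S, β ≤ c i / (1 - η) := by
    rintro β ⟨hb0, u, hu0, hsum⟩
    have h := hsum i
    have h1 : 0 ≤ ∑ p, u p * Θ p i :=
      Finset.sum_nonneg fun p _ => mul_nonneg (hu0 p) (hΘ0 p i)
    have h2 : β * Θ (Fin.castLE hkn i) i ≤ c i := by linarith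
    have h3 : β * (1 - η) ≤ β * Θ (Fin.castLE hkn i) i :=
      mul_le_mul_of_nonneg_left (hdiag i) hb0
    rw [le_div_iff₀ (by linarith : (0:ℝ) < 1 - η)]
    linarith
  have hbdd : BddAbove S := ⟨c i / (1 - η), hub⟩
  constructor
  · rw [hβ]
    calc c i - 2 * s2 * η * (k:ℝ) * cmax ≤ z i := hzi
    _ ≤ sSup S := le_csSup hbdd hmem
  · rw [hβ]
    exact csSup_le ⟨z i, hmem⟩ hub
end

section
/- Let I' ∈ ℝ^{k×k} have rows in the unit simplex with ‖I'(i,:) − e_iᵀ‖_∞ ≤ η ≤ 1/(2√(2k)) for each i, and let c ∈ ℝ^k with entries in [c_min, c_max]. If z solves I'ᵀz = c and η ≤ (1/(2√2·k))·(c_min/c_max), then z ≥ 0 and moreover |z_s − c_s| ≤ 2√2·η·k·c_max for every s ∈ [k]. -/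
theorem stmt14 {k : ℕ} (hk : 1 ≤ k) (I' : Matrix (Fin k) (Fin k) ℝ)
    (hI0 : ∀ i j, 0 ≤ I' i j) (hI1 : ∀ i, ∑ j, I' i j = 1)
    (η : ℝ) (hη0 : 0 ≤ η) (hηk : η ≤ 1 / (2 * Real.sqrt (2 * k)))
    (hrows : ∀ i : Fin k, ‖I' i - Pi.single i 1‖ ≤ η)
    (c : Fin k → ℝ) (cmin cmax : ℝ) (hcmin : 0 < cmin)
    (hcbounds : ∀ s, cmin ≤ c s ∧ c s ≤ cmax)
    (hη : η ≤ 1 / (2 * Real.sqrt 2 * k) * (cmin / cmax))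
    (z : Fin k → ℝ) (hz : ∀ s, ∑ p, z p * I' p s = c s) :
    (∀ s, 0 ≤ z s) ∧ ∀ s, |z s - c s| ≤ 2 * Real.sqrt 2 * η * k * cmax := by
  have hk1 : (1:ℝ) ≤ (k:ℝ) := by exact_mod_cast hk
  have hkpos : (0:ℝ) < k := by linarith
  have hs2 : Real.sqrt 2 ^ 2 = 2 := Real.sq_sqrt (by norm_num)
  have hs2pos : 1 < Real.sqrt 2 := by nlinarith [Real.sqrt_nonneg 2]
  set s2 := Real.sqrt 2 with hs2def
  have hcmax : cmin ≤ cmax :=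
    le_trans (hcbounds ⟨0, hk⟩).1 (hcbounds ⟨0, hk⟩).2
  have hcmaxpos : 0 < cmax := lt_of_lt_of_le hcmin hcmax
  -- entrywise epsilon bound
  have heps : ∀ p s : Fin k, |I' p s - (if p = s then 1 else 0)| ≤ η := by
    intro p s
    have h2 : ‖(I' p - Pi.single p 1 : Fin k → ℝ) s‖ ≤ ‖I' p - Pi.single p 1‖ :=
      norm_le_pi_norm (I' p - Pi.single p 1 : Fin k → ℝ) s
    have h3 : (I' p - Pi.single p 1 : Fin k → ℝ) s = I' p s - (if p = s then 1 else 0) := by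
      simp [Pi.single_apply, eq_comm]
    rw [h3] at h2
    exact le_trans h2 (hrows p)
  -- the equation rearranged
  have heq : ∀ s, z s - c s = -∑ p, z p * (I' p s - (if p = s then 1 else 0)) := by
    intro s
    have h1 : ∑ p, z p * (I' p s - (if p = s then 1 else 0))
        = (∑ p, z p * I' p s) - ∑ p, (if p = s then z p else 0) := by
      rw [← Finset.sum_sub_distrib]
      apply Finset.sum_congr rfl
      intro p _
      split <;> ring
    have h2 : ∑ p, (if p = s then z p else 0) = z s := by
      simp
    rw [h1, h2, hz s]
    ring
  have hne : (Finset.univ : Finset (Fin k)).Nonempty := ⟨⟨0, hk⟩, Finset.mem_univ _⟩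
  set Z := Finset.univ.sup' hne (fun p => |z p|) with hZdef
  have hZle' : ∀ p, |z p| ≤ Z := fun p => Finset.le_sup' (fun q => |z q|) (Finset.mem_univ p)
  have hZ0 : 0 ≤ Z := le_trans (abs_nonneg _) (hZle' ⟨0, hk⟩)
  -- step bound
  have hstep : ∀ s, |z s - c s| ≤ (k:ℝ) * η * Z := by
    intro s
    rw [heq s, abs_neg]
    calc |∑ p, z p * (I' p s - (if p = s then 1 else 0))|
        ≤ ∑ p, |z p * (I' p s - (if p = s then 1 else 0))| :=
          Finset.abs_sum_le_sum_abs _ _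
      _ ≤ ∑ _p : Fin k, Z * η := by
          apply Finset.sum_le_sum
          intro p _
          rw [abs_mul]
          exact mul_le_mul (hZle' p) (heps p s) (abs_nonneg _) hZ0
      _ = (k:ℝ) * η * Z := by
          simp [Finset.sum_const, Finset.card_univ]
          ring
  -- k * η ≤ 1 / (2 * s2)
  have hratio : cmin / cmax ≤ 1 := (div_le_one hcmaxpos).mpr hcmax
  have hs2k : (0:ℝ) < 2 * s2 * k := by positivity
  have hkη : (k:ℝ) * η ≤ 1 / (2 * s2) := by
    have h1 : (k:ℝ) * η ≤ (k:ℝ) * (1 / (2 * s2 * k) * (cmin / cmax)) :=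
      mul_le_mul_of_nonneg_left hη (le_of_lt hkpos)
    have h2 : (k:ℝ) * (1 / (2 * s2 * k) * (cmin / cmax))
        = 1 / (2 * s2) * (cmin / cmax) := by
      field_simp
    rw [h2] at h1
    have h3 : 1 / (2 * s2) * (cmin / cmax) ≤ 1 / (2 * s2) * 1 := by
      apply mul_le_mul_of_nonneg_left hratio
      positivity
    linarith
  have hkη0 : 0 ≤ (k:ℝ) * η := by positivity
  -- bound on Z
  obtain ⟨p0, -, hp0⟩ := Finset.exists_mem_eq_sup' hne (fun p => |z p|)
  have hcp0 : |c p0| ≤ cmax := by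
    rw [abs_of_pos (lt_of_lt_of_le hcmin (hcbounds p0).1)]
    exact (hcbounds p0).2
  have hZ1 : Z ≤ (k:ℝ) * η * Z + cmax := by
    have h1 : Z = |z p0| := hp0
    have h2 : |z p0| ≤ |z p0 - c p0| + |c p0| := by
      have : z p0 = (z p0 - c p0) + c p0 := by ring
      calc |z p0| = |(z p0 - c p0) + c p0| := by rw [← this]
        _ ≤ |z p0 - c p0| + |c p0| := abs_add_le _ _
    linarith [hstep p0]
  have hZ2 : Z ≤ 1 / (2 * s2) * Z + cmax := by
    have : (k:ℝ) * η * Z ≤ 1 / (2 * s2) * Z := mul_le_mul_of_nonneg_right hkη hZ0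
    linarith
  have hs2p : (0:ℝ) < s2 := by linarith
  have hZ3 : Z ≤ 2 * s2 * cmax := by
    have h1 : 2 * s2 * Z ≤ Z + 2 * s2 * cmax := by
      have := mul_le_mul_of_nonneg_left hZ2 (le_of_lt (by positivity : (0:ℝ) < 2 * s2))
      have hx : 2 * s2 * (1 / (2 * s2) * Z) = Z := by field_simp
      nlinarith
    nlinarith
  -- final bound
  have hfinal : ∀ s, |z s - c s| ≤ 2 * s2 * η * (k:ℝ) * cmax := by
    intro s
    have h1 : (k:ℝ) * η * Z ≤ (k:ℝ) * η * (2 * s2 * cmax) :=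
      mul_le_mul_of_nonneg_left hZ3 hkη0
    have h2 : (k:ℝ) * η * (2 * s2 * cmax) = 2 * s2 * η * (k:ℝ) * cmax := by ring
    linarith [hstep s, h1.trans_eq h2]
  refine ⟨?_, hfinal⟩
  -- nonnegativity
  have hsmall : 2 * s2 * η * (k:ℝ) * cmax ≤ cmin := by
    have h1 : η * (2 * s2 * k * cmax) ≤ 1 / (2 * s2 * k) * (cmin / cmax) * (2 * s2 * k * cmax) :=
      mul_le_mul_of_nonneg_right hη (by positivity)
    have h2 : 1 / (2 * s2 * k) * (cmin / cmax) * (2 * s2 * k * cmax) = cmin := by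
      field_simp
    nlinarith
  intro s
  have h1 := hfinal s
  have h3 := (abs_le.mp h1).1
  have h4 := (hcbounds s).1
  linarith
end
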